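/- arXiv:1408.5682 — 2 statements merged into one kernel-verified Lean document; each statement's English description precedes it below -/
import Mathlib

section
/- The function d defined on pairs of Borel probability measures on ℝ by d(μ₁, μ₂) = sup{ |G_{μ₁}(z) − G_{μ₂}(z)| : z ∈ ℂ, Im(z) ≥ 1 } is a metric on the set of Borel probability measures on ℝ; in particular d(μ₁, μ₂) = 0 implies μ₁ = μ₂, d is symmetric, and d satisfies the triangle inequality. -/
open MeasureTheory Filter
open scoped ENNReal Topology

noncomputable section

/-- The distance `k`-graph of a graph: same vertices, edges between vertices at distance `k`. -/
def distGraph {W : Type*} (H : SimpleGraph W) (k : ℕ) : SimpleGraph W where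
  Adj x y := x ≠ y ∧ H.dist x y = k
  symm := ⟨fun x y h => ⟨h.1.symm, by rw [SimpleGraph.dist_comm]; exact h.2⟩⟩
  loopless := ⟨fun x h => h.1 rfl⟩

/-- Vertex set of the `N`-fold star power of a graph rooted at `e`:
the common root `none`, plus `N` copies of the non-root vertices. -/
abbrev StarVert (V : Type*) (e : V) (N : ℕ) := Option (Fin N × {v : V // v ≠ e})

def starAdj {V : Type*} (G : SimpleGraph V) (e : V) (N : ℕ) :
    StarVert V e N → StarVert V e N → Prop
  | none, none => False
  | none, some q => G.Adj e q.2.1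
  | some p, none => G.Adj p.2.1 e
  | some p, some q => p.1 = q.1 ∧ G.Adj p.2.1 q.2.1

/-- The `N`-fold star power of a rooted graph `(G, e)`: `N` copies of `G` glued at `e`. -/
def starPower {V : Type*} (G : SimpleGraph V) (e : V) (N : ℕ) :
    SimpleGraph (StarVert V e N) where
  Adj := starAdj G e N
  symm := by
    constructor
    rintro (_ | p) (_ | q) h
    · exact h.elim
    · exact h.symm
    · exact h.symm
    · exact ⟨h.1.symm, h.2.symm⟩
  loopless := by
    constructor
    rintro (_ | p) h
    · exact h.elim
    · exact G.loopless.irrefl _ h.2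

/-- The vertex of the `i`-th copy of `G` in the `N`-fold star power corresponding to `v ∈ G`. -/
def rootedEmbed {V : Type*} [DecidableEq V] (e : V) (N : ℕ) (i : Fin N) (v : V) :
    StarVert V e N :=
  if h : v = e then none else some (i, ⟨v, h⟩)

open scoped Classical in
/-- The real adjacency matrix of a graph. -/
def adjMat {W : Type*} [Fintype W] (H : SimpleGraph W) : Matrix W W ℝ :=
  fun x y => if H.Adj x y then 1 else 0

/-- The centered Bernoulli distribution `(1/2)δ_{-1} + (1/2)δ_1`. -/
def bern : Measure ℝ := (1/2 : ℝ≥0∞) • Measure.dirac (-1) + (1/2 : ℝ≥0∞) • Measure.dirac 1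

/-- The Cauchy transform of a measure on `ℝ`. -/
def cauchyT (μ : Measure ℝ) (z : ℂ) : ℂ := ∫ x, (z - (x : ℂ))⁻¹ ∂μ

/-- The distance `d(μ₁,μ₂) = sup_{Im z ≥ 1} |G_{μ₁}(z) - G_{μ₂}(z)|`. -/
def cdist (μ₁ μ₂ : Measure ℝ) : ℝ :=
  ⨆ z : {z : ℂ // 1 ≤ z.im}, ‖cauchyT μ₁ z - cauchyT μ₂ z‖

/-!
The Cauchy transform `G_μ` of a finite measure is holomorphic on the upper half-plane, so if
`d(μ₁, μ₂) = 0` the identity theorem extends `G_{μ₁} = G_{μ₂}` from `Im z ≥ 1` to `Im z > 0`.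
There `-Im G_μ(x + iy)` is the Poisson integral `(P_y * μ)(x)` with `P_y(u) = y / (u² + y²)`,
and since `P_y / π` is an approximate identity as `y → 0⁺`, these Poisson integrals determine
`∫ f dμ` for every bounded continuous `f`, hence `μ`.
-/

open scoped BoundedContinuousFunction Real

lemma norm_inv_sub_ofReal_le {z : ℂ} (hz : 0 < z.im) (t : ℝ) : ‖(z - t)⁻¹‖ ≤ z.im⁻¹ := by
  rw [norm_inv]
  refine inv_anti₀ hz ?_
  calc z.im ≤ |(z - t).im| := by simpa using le_abs_self z.im
    _ ≤ ‖z - t‖ := Complex.abs_im_le_norm _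

lemma integrable_inv_sub_ofReal (μ : Measure ℝ) [IsFiniteMeasure μ] {z : ℂ} (hz : 0 < z.im) :
    Integrable (fun t : ℝ => (z - t)⁻¹) μ := by
  refine (integrable_const z.im⁻¹).mono' ?_ (ae_of_all _ (norm_inv_sub_ofReal_le hz))
  refine (Continuous.inv₀ (by fun_prop) fun t h => ?_).aestronglyMeasurable
  simpa [hz.ne'] using congrArg Complex.im h

lemma norm_cauchyT_le (μ : Measure ℝ) [IsFiniteMeasure μ] {z : ℂ} (hz : 0 < z.im) :
    ‖cauchyT μ z‖ ≤ z.im⁻¹ * μ.real Set.univ :=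
  norm_integral_le_of_norm_le_const (ae_of_all _ (norm_inv_sub_ofReal_le hz))

lemma cauchyT_eq_neg_resolventTransform (μ : Measure ℝ) :
    cauchyT μ = -resolventTransform μ := by
  ext z
  simp only [cauchyT, resolventTransform, resolvent, Pi.neg_apply, ← integral_neg,
    Ring.inverse_eq_inv', Complex.coe_algebraMap, neg_inv, neg_sub]

lemma analyticOnNhd_cauchyT (μ : Measure ℝ) [IsFiniteMeasure μ] :
    AnalyticOnNhd ℂ (cauchyT μ) {z | 0 < z.im} := by
  have hopen : IsOpen {z : ℂ | 0 < z.im} := isOpen_lt continuous_const Complex.continuous_im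
  rw [← hopen.analyticOn_iff_analyticOnNhd, cauchyT_eq_neg_resolventTransform]
  refine (analyticOn_resolventTransform.mono ?_).neg
  rintro z hz ⟨t, -, rfl⟩
  simp at hz

lemma cauchyT_eq_of_eq_of_one_le_im {μ₁ μ₂ : Measure ℝ} [IsFiniteMeasure μ₁] [IsFiniteMeasure μ₂]
    (h : ∀ z : ℂ, 1 ≤ z.im → cauchyT μ₁ z = cauchyT μ₂ z) {z : ℂ} (hz : 0 < z.im) :
    cauchyT μ₁ z = cauchyT μ₂ z := by
  have heq : cauchyT μ₁ =ᶠ[𝓝 (2 * Complex.I)] cauchyT μ₂ := by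
    filter_upwards [(isOpen_lt continuous_const Complex.continuous_im).mem_nhds
      (show (1 : ℝ) < (2 * Complex.I).im by simp)] with w hw using h w hw.le
  exact (analyticOnNhd_cauchyT μ₁).eqOn_of_preconnected_of_eventuallyEq (analyticOnNhd_cauchyT μ₂)
    (convex_halfSpace_im_gt 0).isPreconnected (by simp) heq hz

section Cdist

lemma cdist_nonneg (μ₁ μ₂ : Measure ℝ) : 0 ≤ cdist μ₁ μ₂ :=
  Real.iSup_nonneg fun _ => norm_nonneg _

lemma cdist_self (μ : Measure ℝ) : cdist μ μ = 0 := by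
  simp [cdist]

lemma cdist_comm (μ₁ μ₂ : Measure ℝ) : cdist μ₁ μ₂ = cdist μ₂ μ₁ := by
  simp only [cdist, norm_sub_rev]

variable {μ₁ μ₂ : Measure ℝ} [IsFiniteMeasure μ₁] [IsFiniteMeasure μ₂]

lemma bddAbove_range_norm_sub_cauchyT :
    BddAbove (Set.range fun z : {z : ℂ // 1 ≤ z.im} => ‖cauchyT μ₁ z - cauchyT μ₂ z‖) := by
  refine ⟨μ₁.real Set.univ + μ₂.real Set.univ, ?_⟩
  rintro _ ⟨⟨z, hz⟩, rfl⟩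
  have hz₀ : 0 < z.im := one_pos.trans_le hz
  have hinv : z.im⁻¹ ≤ 1 := inv_le_one_of_one_le₀ hz
  calc ‖cauchyT μ₁ z - cauchyT μ₂ z‖ ≤ ‖cauchyT μ₁ z‖ + ‖cauchyT μ₂ z‖ := norm_sub_le _ _
    _ ≤ z.im⁻¹ * μ₁.real Set.univ + z.im⁻¹ * μ₂.real Set.univ :=
      add_le_add (norm_cauchyT_le μ₁ hz₀) (norm_cauchyT_le μ₂ hz₀)
    _ ≤ μ₁.real Set.univ + μ₂.real Set.univ :=
      add_le_add (mul_le_of_le_one_left measureReal_nonneg hinv)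
        (mul_le_of_le_one_left measureReal_nonneg hinv)

lemma norm_sub_cauchyT_le_cdist {z : ℂ} (hz : 1 ≤ z.im) :
    ‖cauchyT μ₁ z - cauchyT μ₂ z‖ ≤ cdist μ₁ μ₂ :=
  le_ciSup (f := fun z : {z : ℂ // 1 ≤ z.im} => ‖cauchyT μ₁ z - cauchyT μ₂ z‖)
    bddAbove_range_norm_sub_cauchyT ⟨z, hz⟩

lemma cauchyT_eq_of_cdist_eq_zero (h : cdist μ₁ μ₂ = 0) {z : ℂ} (hz : 1 ≤ z.im) :
    cauchyT μ₁ z = cauchyT μ₂ z := by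
  rw [← sub_eq_zero, ← norm_le_zero_iff, ← h]
  exact norm_sub_cauchyT_le_cdist hz

lemma cdist_triangle (μ₃ : Measure ℝ) [IsFiniteMeasure μ₃] :
    cdist μ₁ μ₃ ≤ cdist μ₁ μ₂ + cdist μ₂ μ₃ := by
  refine Real.iSup_le (fun ⟨z, hz⟩ => ?_) (add_nonneg (cdist_nonneg _ _) (cdist_nonneg _ _))
  calc ‖cauchyT μ₁ z - cauchyT μ₃ z‖
      ≤ ‖cauchyT μ₁ z - cauchyT μ₂ z‖ + ‖cauchyT μ₂ z - cauchyT μ₃ z‖ :=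
        norm_sub_le_norm_sub_add_norm_sub _ _ _
    _ ≤ cdist μ₁ μ₂ + cdist μ₂ μ₃ :=
        add_le_add (norm_sub_cauchyT_le_cdist hz) (norm_sub_cauchyT_le_cdist hz)

end Cdist

section Poisson

def halfPlanePoissonKernel (y u : ℝ) : ℝ := y / (u ^ 2 + y ^ 2)

def poissonIntegral (μ : Measure ℝ) (y x : ℝ) : ℝ := ∫ t, halfPlanePoissonKernel y (x - t) ∂μ

lemma halfPlanePoissonKernel_nonneg {y : ℝ} (hy : 0 ≤ y) (u : ℝ) :
    0 ≤ halfPlanePoissonKernel y u := by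
  unfold halfPlanePoissonKernel
  positivity

lemma continuous_halfPlanePoissonKernel {y : ℝ} (hy : 0 < y) :
    Continuous (halfPlanePoissonKernel y) :=
  continuous_const.div (by fun_prop) fun u => by positivity

lemma poissonIntegral_eq_neg_im_cauchyT (μ : Measure ℝ) [IsFiniteMeasure μ] {y : ℝ} (hy : 0 < y)
    (x : ℝ) : poissonIntegral μ y x = -(cauchyT μ (x + y * Complex.I)).im := by
  have hz : 0 < (x + y * Complex.I).im := by simpa using hy
  rw [cauchyT, ← RCLike.im_eq_complex_im, ← integral_im (integrable_inv_sub_ofReal μ hz),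
    ← integral_neg, poissonIntegral]
  congr 1 with t
  simp [halfPlanePoissonKernel, Complex.normSq_apply]
  ring

lemma integral_mul_halfPlanePoissonKernel_sub (g : ℝ → ℝ) {y : ℝ} (hy : 0 < y) (t : ℝ) :
    ∫ x, g x * halfPlanePoissonKernel y (x - t) = ∫ s, g (t + y * s) * (1 + s ^ 2)⁻¹ := by
  set h : ℝ → ℝ := fun x => g x * halfPlanePoissonKernel y (x - t)
  have hsubst : ∫ s, h (y * s + t) = y⁻¹ * ∫ x, h x := by
    rw [Measure.integral_comp_mul_left (fun u => h (u + t)) y, integral_add_right_eq_self,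
      abs_of_pos (inv_pos.2 hy), smul_eq_mul]
  have hpoint (s : ℝ) : g (t + y * s) * (1 + s ^ 2)⁻¹ = y * h (y * s + t) := by
    simp only [h, halfPlanePoissonKernel, add_sub_cancel_right, add_comm t]
    field_simp
    ring
  simp_rw [hpoint]
  rw [integral_const_mul, hsubst, mul_inv_cancel_left₀ hy.ne']

lemma integral_halfPlanePoissonKernel_sub {y : ℝ} (hy : 0 < y) (t : ℝ) :
    ∫ x, halfPlanePoissonKernel y (x - t) = π := by
  simpa [integral_univ_inv_one_add_sq] using
    integral_mul_halfPlanePoissonKernel_sub (fun _ => 1) hy t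

lemma integrable_halfPlanePoissonKernel_sub {y : ℝ} (hy : 0 < y) (t : ℝ) :
    Integrable fun x => halfPlanePoissonKernel y (x - t) :=
  .of_integral_ne_zero (by rw [integral_halfPlanePoissonKernel_sub hy t]; exact Real.pi_ne_zero)

lemma integrable_halfPlanePoissonKernel_prod (μ : Measure ℝ) [IsFiniteMeasure μ] {y : ℝ}
    (hy : 0 < y) :
    Integrable (fun p : ℝ × ℝ => halfPlanePoissonKernel y (p.2 - p.1)) (μ.prod volume) := by
  have hcont : Continuous fun p : ℝ × ℝ => halfPlanePoissonKernel y (p.2 - p.1) :=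
    (continuous_halfPlanePoissonKernel hy).comp (by fun_prop)
  rw [integrable_prod_iff hcont.aestronglyMeasurable]
  refine ⟨ae_of_all _ (integrable_halfPlanePoissonKernel_sub hy), (integrable_const π).congr ?_⟩
  simp [Real.norm_of_nonneg (halfPlanePoissonKernel_nonneg hy.le _),
    integral_halfPlanePoissonKernel_sub hy]

variable (μ : Measure ℝ) [IsFiniteMeasure μ] (f : ℝ →ᵇ ℝ)

lemma integrable_comp_add_mul_mul_inv_one_add_sq (y : ℝ) :
    Integrable (fun p : ℝ × ℝ => f (p.1 + y * p.2) * (1 + p.2 ^ 2)⁻¹) (μ.prod volume) :=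
  (integrable_inv_one_add_sq.comp_snd μ).bdd_mul (by fun_prop)
    (ae_of_all _ fun _ => f.norm_coe_le_norm _)

lemma integral_mul_poissonIntegral {y : ℝ} (hy : 0 < y) :
    ∫ x, f x * poissonIntegral μ y x =
      ∫ p : ℝ × ℝ, f (p.1 + y * p.2) * (1 + p.2 ^ 2)⁻¹ ∂μ.prod volume := by
  have hint : Integrable (Function.uncurry fun t x => f x * halfPlanePoissonKernel y (x - t))
      (μ.prod volume) :=
    (integrable_halfPlanePoissonKernel_prod μ hy).bdd_mul (by fun_prop)
      (ae_of_all _ fun _ => f.norm_coe_le_norm _)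
  calc ∫ x, f x * poissonIntegral μ y x
      = ∫ x, ∫ t, f x * halfPlanePoissonKernel y (x - t) ∂μ := by
        simp_rw [poissonIntegral, integral_const_mul]
    _ = ∫ t, (∫ x, f x * halfPlanePoissonKernel y (x - t)) ∂μ := (integral_integral_swap hint).symm
    _ = ∫ t, (∫ s, f (t + y * s) * (1 + s ^ 2)⁻¹) ∂μ := by
        congr 1 with t
        exact integral_mul_halfPlanePoissonKernel_sub f hy t
    _ = _ := (integral_prod _ (integrable_comp_add_mul_mul_inv_one_add_sq μ f y)).symm

lemma tendsto_integral_mul_poissonIntegral :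
    Tendsto (fun y => ∫ x, f x * poissonIntegral μ y x) (𝓝[>] 0) (𝓝 (π * ∫ t, f t ∂μ)) := by
  have hlim : Tendsto (fun y => ∫ p, f (p.1 + y * p.2) * (1 + p.2 ^ 2)⁻¹ ∂μ.prod volume) (𝓝 0)
      (𝓝 (∫ p : ℝ × ℝ, f p.1 * (1 + p.2 ^ 2)⁻¹ ∂μ.prod volume)) := by
    refine tendsto_integral_filter_of_dominated_convergence (fun p => ‖f‖ * (1 + p.2 ^ 2)⁻¹)
      (.of_forall fun y => (integrable_comp_add_mul_mul_inv_one_add_sq μ f y).aestronglyMeasurable)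
      (.of_forall fun y => ae_of_all _ fun p => ?_)
      ((integrable_inv_one_add_sq.comp_snd μ).const_mul ‖f‖)
      (ae_of_all _ fun p => ?_)
    · have hpos : 0 ≤ (1 + p.2 ^ 2)⁻¹ := by positivity
      rw [norm_mul, Real.norm_of_nonneg hpos]
      exact mul_le_mul_of_nonneg_right (f.norm_coe_le_norm _) hpos
    · exact ((f.continuous.comp (by fun_prop)).tendsto' _ _ (by simp)).mul_const _
  rw [integral_prod_mul (fun t => f t) (fun s => (1 + s ^ 2)⁻¹), integral_univ_inv_one_add_sq,
    mul_comm] at hlim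
  refine (hlim.mono_left nhdsWithin_le_nhds).congr' ?_
  filter_upwards [self_mem_nhdsWithin] with y hy using (integral_mul_poissonIntegral μ f hy).symm

end Poisson

lemma ext_of_poissonIntegral_eq {μ₁ μ₂ : Measure ℝ} [IsFiniteMeasure μ₁] [IsFiniteMeasure μ₂]
    (h : ∀ y, 0 < y → poissonIntegral μ₁ y = poissonIntegral μ₂ y) : μ₁ = μ₂ := by
  refine ext_of_forall_integral_eq_of_IsFiniteMeasure fun f => mul_left_cancel₀ Real.pi_ne_zero ?_
  refine tendsto_nhds_unique (tendsto_integral_mul_poissonIntegral μ₁ f) ?_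
  refine (tendsto_integral_mul_poissonIntegral μ₂ f).congr' ?_
  filter_upwards [self_mem_nhdsWithin] with y hy
  rw [h y hy]

lemma ext_of_cauchyT_eq {μ₁ μ₂ : Measure ℝ} [IsFiniteMeasure μ₁] [IsFiniteMeasure μ₂]
    (h : ∀ z : ℂ, 0 < z.im → cauchyT μ₁ z = cauchyT μ₂ z) : μ₁ = μ₂ :=
  ext_of_poissonIntegral_eq fun y hy => funext fun x => by
    rw [poissonIntegral_eq_neg_im_cauchyT μ₁ hy, poissonIntegral_eq_neg_im_cauchyT μ₂ hy,
      h _ (by simpa using hy)]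

lemma eq_of_cdist_eq_zero {μ₁ μ₂ : Measure ℝ} [IsFiniteMeasure μ₁] [IsFiniteMeasure μ₂]
    (h : cdist μ₁ μ₂ = 0) : μ₁ = μ₂ :=
  ext_of_cauchyT_eq fun _ hz =>
    cauchyT_eq_of_eq_of_one_le_im (fun _ hw => cauchyT_eq_of_cdist_eq_zero h hw) hz

/-- `d(μ₁,μ₂) = sup_{Im z ≥ 1} |G_{μ₁}(z) − G_{μ₂}(z)|` is a metric on Borel
probability measures on `ℝ`: it vanishes on the diagonal, separates points, is symmetric,
and satisfies the triangle inequality. -/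
theorem cdist_is_metric :
    (∀ μ₁ μ₂ : Measure ℝ, IsProbabilityMeasure μ₁ → IsProbabilityMeasure μ₂ →
        0 ≤ cdist μ₁ μ₂) ∧
    (∀ μ : Measure ℝ, IsProbabilityMeasure μ → cdist μ μ = 0) ∧
    (∀ μ₁ μ₂ : Measure ℝ, IsProbabilityMeasure μ₁ → IsProbabilityMeasure μ₂ →
        cdist μ₁ μ₂ = 0 → μ₁ = μ₂) ∧
    (∀ μ₁ μ₂ : Measure ℝ, IsProbabilityMeasure μ₁ → IsProbabilityMeasure μ₂ →
        cdist μ₁ μ₂ = cdist μ₂ μ₁) ∧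
    (∀ μ₁ μ₂ μ₃ : Measure ℝ, IsProbabilityMeasure μ₁ → IsProbabilityMeasure μ₂ →
        IsProbabilityMeasure μ₃ → cdist μ₁ μ₃ ≤ cdist μ₁ μ₂ + cdist μ₂ μ₃) :=
  ⟨fun μ₁ μ₂ _ _ => cdist_nonneg μ₁ μ₂,
   fun μ _ => cdist_self μ,
   fun _ _ _ _ h => eq_of_cdist_eq_zero h,
   fun μ₁ μ₂ _ _ => cdist_comm μ₁ μ₂,
   fun _ _ μ₃ _ _ _ => cdist_triangle μ₃⟩

end
end

section
/- Let G = (V,E,e) be a connected finite simple rooted graph and k ≥ 1 such that V_e^{[k]}, the set of vertices of G at graph distance exactly k from e, is nonempty. Then for every N ≥ 1, the number of neighbors of the root e in the distance k-graph (G^{⋆N})^{[k]} of the N-fold star power equals N·|V_e^{[k]}|. Equivalently, the (e,e)-entry of (A^{[⋆N,k]})² equals N·|V_e^{[k]}|, where A^{[⋆N,k]} is the adjacency matrix of (G^{⋆N})^{[k]}. -/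
open MeasureTheory Filter
open scoped ENNReal Topology

noncomputable section

/-!
The `i`-th copy of `G` embeds into the star power, and collapsing every other copy onto the root
is a left inverse of this embedding that never increases distances. Hence distances from the
root to the `i`-th copy are the distances in `G`, so the neighbours of the root in the distance
`k`-graph are the `N` copies of `V_e^{[k]}` (for `k ≥ 1` the root itself is not one of them). The
`(e,e)` entry of the squared adjacency matrix is the degree of the root.
-/

namespace SimpleGraph

variable {V W : Type*} {G : SimpleGraph V} {H : SimpleGraph W}

theorem edist_apply_le_edist {f : V → W} (hf : ∀ ⦃u v⦄, G.Adj u v → f u = f v ∨ H.Adj (f u) (f v))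
    {u v : V} : H.edist (f u) (f v) ≤ G.edist u v := by
  suffices ∀ p : G.Walk u v, H.edist (f u) (f v) ≤ p.length by
    simpa only [edist, le_iInf_iff] using this
  intro p
  induction p with
  | nil => simp
  | @cons a b c hab p ih =>
    have hstep : H.edist (f a) (f b) ≤ 1 := edist_le_one_iff_adj_or_eq.2 (hf hab).symm
    calc H.edist (f a) (f c) ≤ H.edist (f a) (f b) + H.edist (f b) (f c) := H.edist_triangle
      _ ≤ 1 + p.length := add_le_add hstep ih
      _ = (Walk.cons hab p).length := by rw [Walk.length_cons, add_comm]; rfl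

theorem dist_apply_eq_of_leftInverse {f : V → W} {g : W → V}
    (hf : ∀ ⦃u v⦄, G.Adj u v → f u = f v ∨ H.Adj (f u) (f v))
    (hg : ∀ ⦃x y⦄, H.Adj x y → g x = g y ∨ G.Adj (g x) (g y))
    (hgf : Function.LeftInverse g f) (u v : V) : H.dist (f u) (f v) = G.dist u v := by
  have hedist : H.edist (f u) (f v) = G.edist u v := by
    refine le_antisymm (edist_apply_le_edist hf) ?_
    simpa only [hgf u, hgf v] using edist_apply_le_edist hg (u := f u) (v := f v)
  rw [dist, dist, hedist]

theorem adjMat_sq_apply_self [Fintype W] [DecidableEq W] (x : W) :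
    (adjMat H ^ 2) x x = Nat.card (H.neighborSet x) := by
  classical
  rw [Nat.card_eq_fintype_card, card_neighborSet_eq_degree, pow_two,
    ← adjMatrix_mul_self_apply_self]
  congr

end SimpleGraph

section StarPower

open SimpleGraph

variable {V : Type*} {G : SimpleGraph V} {e : V} {N : ℕ}

def starProj (i : Fin N) : StarVert V e N → V
  | none => e
  | some p => if p.1 = i then p.2.1 else e

theorem starProj_rootedEmbed [DecidableEq V] (i : Fin N) (v : V) :
    starProj i (rootedEmbed e N i v) = v := by
  unfold rootedEmbed
  split_ifs with hv
  · exact hv.symm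
  · simp [starProj]

theorem starProj_eq_or_adj (i : Fin N) {x y : StarVert V e N} (h : (starPower G e N).Adj x y) :
    starProj i x = starProj i y ∨ G.Adj (starProj i x) (starProj i y) := by
  match x, y, h with
  | none, some q, h | some q, none, h =>
    by_cases hq : q.1 = i
    · right; simp only [starProj, hq, if_true]; exact h
    · left; simp [starProj, hq]
  | some p, some q, ⟨hpq, h⟩ =>
    by_cases hp : p.1 = i
    · right; simp only [starProj, hp, ← hpq, if_true]; exact h
    · left; simp [starProj, hp, ← hpq]

theorem starPower_adj_rootedEmbed [DecidableEq V] (i : Fin N) {u v : V} (h : G.Adj u v) :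
    (starPower G e N).Adj (rootedEmbed e N i u) (rootedEmbed e N i v) := by
  unfold rootedEmbed
  split_ifs with hu hv hv
  · exact absurd (hu.trans hv.symm) h.ne
  · subst hu; exact h
  · subst hv; exact h
  · exact ⟨rfl, h⟩

theorem dist_starPower_rootedEmbed [DecidableEq V] (i : Fin N) (u v : V) :
    (starPower G e N).dist (rootedEmbed e N i u) (rootedEmbed e N i v) = G.dist u v :=
  dist_apply_eq_of_leftInverse (fun _ _ h => .inr (starPower_adj_rootedEmbed i h))
    (fun _ _ => starProj_eq_or_adj i) (starProj_rootedEmbed i) u v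

theorem dist_starPower_none_some (p : Fin N × {v : V // v ≠ e}) :
    (starPower G e N).dist none (some p) = G.dist e p.2 := by
  classical
  have hroot : rootedEmbed e N p.1 e = none := dif_pos rfl
  have hp : rootedEmbed e N p.1 p.2.1 = some p := dif_neg p.2.2
  rw [← hroot, ← hp, dist_starPower_rootedEmbed]

theorem distGraph_starPower_adj_none_some {k : ℕ} (p : Fin N × {v : V // v ≠ e}) :
    (distGraph (starPower G e N) k).Adj none (some p) ↔ G.dist e p.2 = k := by
  simp [distGraph, dist_starPower_none_some]

theorem card_neighborSet_distGraph_starPower_none {k : ℕ} (hk : k ≠ 0) :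
    Nat.card ((distGraph (starPower G e N) k).neighborSet none) =
      N * Nat.card {v : V | G.dist e v = k} := by
  have hne : ∀ v : V, G.dist e v = k → v ≠ e := by
    rintro v hv rfl
    exact hk (by simpa using hv.symm)
  let f : Fin N × {v : V | G.dist e v = k} → (distGraph (starPower G e N) k).neighborSet none :=
    fun p => ⟨some (p.1, ⟨p.2, hne p.2 p.2.2⟩), (distGraph_starPower_adj_none_some _).2 p.2.2⟩
  have hf : Function.Bijective f := by
    refine ⟨fun p q hpq => ?_, ?_⟩
    · obtain ⟨hi, hv⟩ := Prod.mk.inj (Option.some.inj (congrArg Subtype.val hpq))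
      exact Prod.ext hi (Subtype.ext (congrArg Subtype.val hv :))
    · rintro ⟨_ | p, hp⟩
      · exact (hp.1 rfl).elim
      · exact ⟨(p.1, ⟨p.2, (distGraph_starPower_adj_none_some p).1 hp⟩), rfl⟩
  rw [← Nat.card_congr (Equiv.ofBijective f hf), Nat.card_prod, Nat.card_fin]

end StarPower

theorem star_power_root_degree_general
    {V : Type*} [Fintype V] [DecidableEq V] (G : SimpleGraph V) (e : V)
    (k : ℕ) (hk : 1 ≤ k)
    (σ : ℕ) (hσ : σ = Nat.card {v : V | G.dist e v = k}) (N : ℕ) :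
    Nat.card {w : StarVert V e N | (distGraph (starPower G e N) k).Adj none w} = N * σ ∧
    ((adjMat (distGraph (starPower G e N) k)) ^ 2) none none = (N * σ : ℝ) := by
  have hdegree : Nat.card ((distGraph (starPower G e N) k).neighborSet none) = N * σ :=
    hσ ▸ card_neighborSet_distGraph_starPower_none (Nat.one_le_iff_ne_zero.1 hk)
  refine ⟨hdegree, ?_⟩
  rw [SimpleGraph.adjMat_sq_apply_self, hdegree, Nat.cast_mul]

/-- The root of the `N`-fold star power has exactly `N·|V_e^{[k]}|` neighbours
in the distance `k`-graph; equivalently the `(e,e)` entry of the square of its adjacency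
matrix equals `N·|V_e^{[k]}|`. -/
theorem star_power_root_degree
    {V : Type*} [Fintype V] [DecidableEq V] (G : SimpleGraph V) (e : V)
    (hconn : G.Connected) (k : ℕ) (hk : 1 ≤ k)
    (σ : ℕ) (hσ : σ = Nat.card {v : V | G.dist e v = k}) (hσpos : 1 ≤ σ)
    (N : ℕ) (hN : 1 ≤ N) :
    Nat.card {w : StarVert V e N | (distGraph (starPower G e N) k).Adj none w} = N * σ ∧
    ((adjMat (distGraph (starPower G e N) k)) ^ 2) none none = (N * σ : ℝ) :=
  star_power_root_degree_general G e k hk σ hσ N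

end
end
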